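/- Let E be an A-module. (i) If E is an annihilator multiplication module and faithful, then Ass_A(E) ⊆ Ass(A). (ii) If E is a non-torsion annihilator multiplication module, then Ass(A) = Ass_A(E). -/

import Mathlib

/-- An `A`-module `E` is an *annihilator multiplication module* if for every `e ∈ E`
there exists a finitely generated ideal `I` of `A` such that `ann(e) = ann(IE)`. -/
def IsAnnMultiplication (A : Type*) [CommRing A] (E : Type*) [AddCommGroup E]
    [Module A E] : Prop :=
  ∀ e : E, ∃ I : Ideal A, I.FG ∧
    (Submodule.span A {e}).annihilator = (I • (⊤ : Submodule A E)).annihilator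

/-! `associatedPrimes` consists of the primes of the form `√ann(e)`. If `E` is a faithful
annihilator multiplication module, then `ann(e) = ann(IE) = ann_A(I)` for a finitely generated
ideal `I = (x₁, …, xₙ)`, and `ann_A(I) = ⋂ ann(xᵢ)`; a prime that is the radical of a finite
intersection of ideals is the radical of one of them, hence an associated prime of `A`.
If `ann(e) = 0`, then `E` is faithful and `a ↦ a • e` embeds `A` into `E`, which gives the
reverse inclusion. -/

namespace Submodule

variable {R M : Type*} [CommSemiring R] [AddCommMonoid M] [Module R M]

theorem annihilator_smul_eq_colon (I : Ideal R) (N : Submodule R M) :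
    (I • N).annihilator = N.annihilator.colon (I : Set R) := by
  ext r
  rw [mem_annihilator', smul_le, mem_colon]
  simp only [SetLike.mem_coe, mem_annihilator, mem_comap, mem_bot, LinearMap.smul_apply,
    LinearMap.id_apply, smul_assoc]

theorem annihilator_span_finset (s : Finset M) :
    (span R (s : Set M)).annihilator = s.inf fun g ↦ (span R {g}).annihilator := by
  ext r
  simp [mem_annihilator_span, mem_finsetInf]

end Submodule

section CommSemiring

open Submodule

variable {R M : Type*} [CommSemiring R] [AddCommMonoid M] [Module R M]

theorem isAssociatedPrime_of_eq_radical_annihilator_of_fg {P : Ideal R} (hP : P.IsPrime)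
    {N : Submodule R M} (hN : N.FG) (h : P = N.annihilator.radical) :
    IsAssociatedPrime P M := by
  obtain ⟨s, rfl⟩ := hN
  rw [annihilator_span_finset] at h
  obtain ⟨g, hg, hgP⟩ := hP.inf_le'.mp (h ▸ Ideal.le_radical)
  refine ⟨hP, g, ?_⟩
  rw [bot_colon']
  refine le_antisymm ?_ (hP.radical_le_iff.mpr hgP)
  exact h ▸ Ideal.radical_mono (Finset.inf_le hg)

end CommSemiring

section CommRing

open Submodule

variable {R M : Type*} [CommRing R] [AddCommGroup M] [Module R M]

theorem associatedPrimes_self_subset_of_annihilator_span_singleton_eq_bot {x : M}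
    (hx : (span R {x}).annihilator = ⊥) : associatedPrimes R R ⊆ associatedPrimes R M := by
  refine associatedPrimes.subset_of_injective (f := LinearMap.toSpanSingleton R M x) ?_
  rw [← LinearMap.ker_eq_bot, ← annihilator_span_singleton, hx]

end CommRing

open Submodule in
theorem associatedPrimes_subset_of_isAnnMultiplication {A E : Type*} [CommRing A]
    [AddCommGroup E] [Module A E] (ham : IsAnnMultiplication A E)
    (hf : (⊤ : Submodule A E).annihilator = ⊥) :
    associatedPrimes A E ⊆ associatedPrimes A A := by
  rintro P ⟨hP, e, he⟩
  obtain ⟨I, hI, heI⟩ := ham e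
  refine isAssociatedPrime_of_eq_radical_annihilator_of_fg hP hI ?_
  rw [he, bot_colon', heI, annihilator_smul_eq_colon, hf, bot_colon]

theorem associatedPrimes_of_isAnnMultiplication_general {A : Type*} [CommRing A]
    {E : Type*} [AddCommGroup E] [Module A E] :
    ((IsAnnMultiplication A E ∧ (⊤ : Submodule A E).annihilator = ⊥) →
      associatedPrimes A E ⊆ associatedPrimes A A) ∧
    ((IsAnnMultiplication A E ∧ ∃ e : E, (Submodule.span A {e}).annihilator = ⊥) →
      associatedPrimes A A = associatedPrimes A E) := by
  refine ⟨fun ⟨ham, hf⟩ ↦ associatedPrimes_subset_of_isAnnMultiplication ham hf, ?_⟩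
  rintro ⟨ham, e, he⟩
  have hf : (⊤ : Submodule A E).annihilator = ⊥ :=
    le_bot_iff.mp (he ▸ Submodule.annihilator_mono le_top)
  exact (associatedPrimes_self_subset_of_annihilator_span_singleton_eq_bot he).antisymm
    (associatedPrimes_subset_of_isAnnMultiplication ham hf)

/-- (i) If `E` is a faithful annihilator multiplication module then
`Ass_A(E) ⊆ Ass(A)`. (ii) If `E` is a non-torsion annihilator multiplication module
then `Ass(A) = Ass_A(E)`. -/
theorem associatedPrimes_of_isAnnMultiplication {A : Type*} [CommRing A] [Nontrivial A]
    {E : Type*} [AddCommGroup E] [Module A E] [Nontrivial E] :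
    ((IsAnnMultiplication A E ∧ (⊤ : Submodule A E).annihilator = ⊥) →
      associatedPrimes A E ⊆ associatedPrimes A A) ∧
    ((IsAnnMultiplication A E ∧ ∃ e : E, (Submodule.span A {e}).annihilator = ⊥) →
      associatedPrimes A A = associatedPrimes A E) :=
  associatedPrimes_of_isAnnMultiplication_general
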